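/- arXiv:0705.0764 — 2 statements merged into one kernel-verified Lean document; each statement's English description precedes it below -/
import Mathlib

section
/- Let V be a real inner product space of dimension n ≥ 2 with inner product g, and let T(c,a,b) be a 3-tensor that is symmetric and trace-free in its last two arguments (a section model of T*M ⊗ B[2]₀). Define the projection G₁ by G₁(T)(c,a,b) = (2/3)T(c,a,b) - (1/3)T(a,c,b) - (1/3)T(b,c,a) - (1/(3(n-1)))(η(a)g(b,c) + η(b)g(a,c)) + (2/(3(n-1)))η(c)g(a,b), where η(a) = Σ_d T(d,d,a). Then G₁ is idempotent: G₁(G₁(T)) = G₁(T). -/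
set_option maxHeartbeats 1000000


open Finset

/-- Kronecker delta (components of the inner product in an orthonormal basis). -/
def gDelta {n : ℕ} (a b : Fin n) : ℝ := if a = b then 1 else 0

/-- The contraction η(a) = Σ_d T(d,d,a). -/
def etaTrace {n : ℕ} (T : Fin n → Fin n → Fin n → ℝ) (a : Fin n) : ℝ := ∑ d, T d d a

/-- The normalized generalized gradient G₁ onto the hook bundle B[2,1]₀, pointwise formula. -/
noncomputable def G1 {n : ℕ} (T : Fin n → Fin n → Fin n → ℝ) : Fin n → Fin n → Fin n → ℝ :=
  fun c a b =>
    (2/3) * T c a b - (1/3) * T a c b - (1/3) * T b c a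
      - (1/(3*((n : ℝ) - 1))) * (etaTrace T a * gDelta b c + etaTrace T b * gDelta a c)
      + (2/(3*((n : ℝ) - 1))) * (etaTrace T c * gDelta a b)

lemma gDelta_symm {n : ℕ} (a b : Fin n) : gDelta a b = gDelta b a := by
  simp [gDelta, eq_comm]

theorem stmt_7 (n : ℕ) (hn : 2 ≤ n) (T : Fin n → Fin n → Fin n → ℝ)
    (hsym : ∀ c a b, T c a b = T c b a)
    (htf : ∀ c, ∑ a, T c a a = 0) :
    G1 (G1 T) = G1 T := by
  have hn1 : (n:ℝ) - 1 ≠ 0 := by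
    have : (2:ℝ) ≤ n := by exact_mod_cast hn
    intro h; linarith
  have heta : ∀ x, etaTrace (G1 T) x = etaTrace T x * 0 := by
    intro x
    simp only [etaTrace, G1, gDelta]
    rw [Finset.sum_add_distrib, Finset.sum_sub_distrib, Finset.sum_sub_distrib,
      Finset.sum_sub_distrib]
    simp only [← Finset.mul_sum, mul_ite, mul_one, mul_zero, Finset.sum_ite_eq,
      Finset.sum_ite_eq', Finset.mem_univ, if_true, htf, if_pos rfl,
      Finset.sum_add_distrib, Finset.sum_const, Finset.card_univ, Fintype.card_fin,
      nsmul_eq_mul]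
    field_simp
    ring
  funext c a b
  show G1 (G1 T) c a b = G1 T c a b
  have h1 : T c b a = T c a b := (hsym c a b).symm
  have h2 : T b a c = T b c a := (hsym b c a).symm
  have h3 : T a b c = T a c b := (hsym a c b).symm
  simp only [G1, heta, mul_zero, zero_mul, h1, h2, h3,
    gDelta_symm b a, gDelta_symm c a, gDelta_symm c b]
  field_simp
  ring
end

section
/- Let n ≥ 3 and let σ be a smooth conformal Killing vector field on flat ℝⁿ: ∂_{(a}σ_{b)} - (1/n)(∂_cσ^c)δ_{ab} = 0. Let Δ = -Σ_a ∂_a∂_a be the Bochner Laplacian on functions. Define D f = σᵃ∂_a f + ((n-2)/(2n))(∂_aσᵃ) f and D̂ f = σᵃ∂_a f + ((n+2)/(2n))(∂_aσᵃ) f. Then Δ(D f) = D̂(Δ f) for every smooth function f : ℝⁿ → ℝ. -/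
open Finset

/-- Partial derivative in the i-th coordinate direction on ℝⁿ. -/
noncomputable def pd {n : ℕ} (i : Fin n) (f : (Fin n → ℝ) → ℝ) : (Fin n → ℝ) → ℝ :=
  fun x => fderiv ℝ f x (Pi.single i 1)

/-- Kronecker delta. -/
def kdelta {n : ℕ} (a b : Fin n) : ℝ := if a = b then 1 else 0

/-- Bochner Laplacian (negative of the sum of second derivatives). -/
noncomputable def lap {n : ℕ} (f : (Fin n → ℝ) → ℝ) : (Fin n → ℝ) → ℝ :=
  fun x => -(∑ a, pd a (pd a f) x)

/-! ### Auxiliary toolkit -/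

/-- Smoothness abbreviation. -/
def Sm {n : ℕ} (f : (Fin n → ℝ) → ℝ) : Prop := ContDiff ℝ ((⊤ : ℕ∞) : WithTop ℕ∞) f

lemma Sm.diff {n : ℕ} {f : (Fin n → ℝ) → ℝ} (hf : Sm f) : Differentiable ℝ f :=
  hf.differentiable (by simp)

lemma Sm.fd {n : ℕ} {f : (Fin n → ℝ) → ℝ} (hf : Sm f) :
    ContDiff ℝ ((⊤ : ℕ∞) : WithTop ℕ∞) (fderiv ℝ f) :=
  hf.fderiv_right (m := ((⊤ : ℕ∞) : WithTop ℕ∞)) (by exact_mod_cast le_top)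

lemma Sm.pd {n : ℕ} {f : (Fin n → ℝ) → ℝ} (hf : Sm f) (i : Fin n) : Sm (pd i f) :=
  hf.fd.clm_apply contDiff_const

lemma Sm.mul {n : ℕ} {f g : (Fin n → ℝ) → ℝ} (hf : Sm f) (hg : Sm g) :
    Sm (fun y => f y * g y) := ContDiff.mul hf hg

lemma Sm.csum {n : ℕ} {ι : Type*} (s : Finset ι) {F : ι → (Fin n → ℝ) → ℝ}
    (hF : ∀ a ∈ s, Sm (F a)) : Sm (fun y => ∑ a ∈ s, F a y) := ContDiff.sum hF

lemma Sm.cmul {n : ℕ} {f : (Fin n → ℝ) → ℝ} (hf : Sm f) (c : ℝ) :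
    Sm (fun y => c * f y) := ContDiff.mul contDiff_const hf

lemma pd_add {n : ℕ} {f g : (Fin n → ℝ) → ℝ} (hf : Sm f) (hg : Sm g) (i : Fin n) :
    pd i (fun y => f y + g y) = fun x => pd i f x + pd i g x := by
  funext x
  simp only [pd, fderiv_fun_add (hf.diff x) (hg.diff x)]
  rfl

lemma pd_const_mul {n : ℕ} {f : (Fin n → ℝ) → ℝ} (hf : Sm f) (c : ℝ) (i : Fin n) :
    pd i (fun y => c * f y) = fun x => c * pd i f x := by
  funext x
  simp only [pd, fderiv_const_mul (hf.diff x) c]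
  rfl

lemma pd_neg {n : ℕ} {f : (Fin n → ℝ) → ℝ} (i : Fin n) :
    pd i (fun y => -(f y)) = fun x => -(pd i f x) := by
  funext x
  simp only [pd, fderiv_fun_neg]
  rfl

lemma pd_mul {n : ℕ} {f g : (Fin n → ℝ) → ℝ} (hf : Sm f) (hg : Sm g) (i : Fin n) :
    pd i (fun y => f y * g y) = fun x => pd i f x * g x + f x * pd i g x := by
  funext x
  simp only [pd, fderiv_fun_mul (hf.diff x) (hg.diff x)]
  simp [pd]
  ring

lemma pd_sum {n : ℕ} {ι : Type*} (s : Finset ι) {F : ι → (Fin n → ℝ) → ℝ}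
    (hF : ∀ a ∈ s, Sm (F a)) (i : Fin n) :
    pd i (fun y => ∑ a ∈ s, F a y) = fun x => ∑ a ∈ s, pd i (F a) x := by
  funext x
  simp only [pd, fderiv_fun_sum (fun a ha => (hF a ha).diff x)]
  simp

lemma pd_comm {n : ℕ} {f : (Fin n → ℝ) → ℝ} (hf : Sm f) (a b : Fin n) (x : Fin n → ℝ) :
    pd a (pd b f) x = pd b (pd a f) x := by
  have hd : Differentiable ℝ (fderiv ℝ f) := hf.fd.differentiable (by simp)
  have key : ∀ (v w : Fin n → ℝ) (y : Fin n → ℝ),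
      fderiv ℝ (fun z => fderiv ℝ f z w) y v = fderiv ℝ (fderiv ℝ f) y v w := by
    intro v w y
    rw [fderiv_clm_apply (hd y) (differentiableAt_const w)]
    simp
  have hsymm : IsSymmSndFDerivAt ℝ f x :=
    (hf.contDiffAt).isSymmSndFDerivAt (by rw [minSmoothness_of_isRCLikeNormedField]; norm_cast)
  show fderiv ℝ (fun z => fderiv ℝ f z (Pi.single b 1)) x (Pi.single a 1)
     = fderiv ℝ (fun z => fderiv ℝ f z (Pi.single a 1)) x (Pi.single b 1)
  rw [key, key, hsymm.eq]

lemma lap_add {n : ℕ} {u v : (Fin n → ℝ) → ℝ} (hu : Sm u) (hv : Sm v) (x : Fin n → ℝ) :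
    lap (fun y => u y + v y) x = lap u x + lap v x := by
  have h1 : ∀ b, pd b (pd b (fun y => u y + v y)) x = pd b (pd b u) x + pd b (pd b v) x := by
    intro b
    rw [pd_add hu hv b]
    exact congrFun (pd_add (hu.pd b) (hv.pd b) b) x
  simp only [lap, h1, Finset.sum_add_distrib]
  ring

lemma lap_const_mul {n : ℕ} {u : (Fin n → ℝ) → ℝ} (hu : Sm u) (c : ℝ) (x : Fin n → ℝ) :
    lap (fun y => c * u y) x = c * lap u x := by
  have h1 : ∀ b, pd b (pd b (fun y => c * u y)) x = c * pd b (pd b u) x := by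
    intro b
    rw [pd_const_mul hu c b]
    exact congrFun (pd_const_mul (hu.pd b) c b) x
  simp only [lap, h1, ← Finset.mul_sum]
  ring

lemma lap_sum {n : ℕ} {ι : Type*} (s : Finset ι) {F : ι → (Fin n → ℝ) → ℝ}
    (hF : ∀ a ∈ s, Sm (F a)) (x : Fin n → ℝ) :
    lap (fun y => ∑ a ∈ s, F a y) x = ∑ a ∈ s, lap (F a) x := by
  have h1 : ∀ b, pd b (pd b (fun y => ∑ a ∈ s, F a y)) x = ∑ a ∈ s, pd b (pd b (F a)) x := by
    intro b
    rw [pd_sum s hF b]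
    exact congrFun (pd_sum s (fun a ha => (hF a ha).pd b) b) x
  simp only [lap, h1]
  rw [Finset.sum_comm]
  simp [Finset.sum_neg_distrib]

lemma lap_mul {n : ℕ} {u v : (Fin n → ℝ) → ℝ} (hu : Sm u) (hv : Sm v) (x : Fin n → ℝ) :
    lap (fun y => u y * v y) x
      = lap u x * v x + u x * lap v x - 2 * ∑ b, pd b u x * pd b v x := by
  have h1 : ∀ b, pd b (pd b (fun y => u y * v y)) x
      = pd b (pd b u) x * v x + 2 * (pd b u x * pd b v x) + u x * pd b (pd b v) x := by
    intro b
    rw [pd_mul hu hv b]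
    have h2 := congrFun (pd_add ((hu.pd b).mul hv) (hu.mul (hv.pd b)) b) x
    have h3 := congrFun (pd_mul (hu.pd b) hv b) x
    have h4 := congrFun (pd_mul hu (hv.pd b) b) x
    calc pd b (fun z => pd b u z * v z + u z * pd b v z) x
        = pd b (fun z => pd b u z * v z) x + pd b (fun z => u z * pd b v z) x := h2
      _ = (pd b (pd b u) x * v x + pd b u x * pd b v x)
          + (pd b u x * pd b v x + u x * pd b (pd b v) x) := by rw [h3, h4]
      _ = _ := by ring
  simp only [lap, h1, Finset.sum_add_distrib, ← Finset.mul_sum, ← Finset.sum_mul]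
  ring

/-- The divergence of σ. -/
noncomputable def psi {n : ℕ} (σ : Fin n → (Fin n → ℝ) → ℝ) : (Fin n → ℝ) → ℝ :=
  fun x => ∑ c, pd c (σ c) x

theorem stmt_11 (n : ℕ) (hn : 3 ≤ n) (σ : Fin n → (Fin n → ℝ) → ℝ)
    (hσ : ∀ a, ContDiff ℝ (⊤ : ℕ∞) (σ a))
    (hck : ∀ a b x, (1/2) * (pd a (σ b) x + pd b (σ a) x)
      - (1/(n : ℝ)) * (∑ c, pd c (σ c) x) * kdelta a b = 0) :
    ∀ f : (Fin n → ℝ) → ℝ, ContDiff ℝ (⊤ : ℕ∞) f → ∀ x,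
      lap (fun y => (∑ a, σ a y * pd a f y)
        + (((n : ℝ) - 2)/(2*(n : ℝ))) * (∑ a, pd a (σ a) y) * f y) x
      = (∑ a, σ a x * pd a (lap f) x)
        + (((n : ℝ) + 2)/(2*(n : ℝ))) * (∑ a, pd a (σ a) x) * lap f x := by
  intro f hf x
  have hn0 : (n : ℝ) ≠ 0 := Nat.cast_ne_zero.mpr (by omega)
  have hn3 : (3 : ℝ) ≤ (n : ℝ) := by exact_mod_cast hn
  have hσ' : ∀ a, Sm (σ a) := fun a => (hσ a).of_le (by simp)
  have hf' : Sm f := hf.of_le (by simp)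
  have hψ : Sm (psi σ) := Sm.csum Finset.univ (fun c _ => (hσ' c).pd c)
  set C : ℝ := ((n : ℝ) - 2)/(2*(n : ℝ)) with hC
  -- (E1) conformal Killing equation
  have e1 : ∀ a b x', pd a (σ b) x' + pd b (σ a) x'
      = 2/(n : ℝ) * kdelta a b * psi σ x' := by
    intro a b x'
    have h := hck a b x'
    have hps : psi σ x' = ∑ c, pd c (σ c) x' := rfl
    rw [hps]
    linear_combination (2:ℝ) * h
  -- (E2) trace of derivative of (E1)
  have e2 : ∀ a x', ∑ b, pd b (pd b (σ a)) x' = (2/(n : ℝ) - 1) * pd a (psi σ) x' := by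
    intro a x'
    have hfun : ∀ b : Fin n, (fun z => pd a (σ b) z + pd b (σ a) z)
        = (fun z => (2/(n : ℝ) * kdelta a b) * psi σ z) := by
      intro b; funext z; rw [e1 a b z]
    have h2 : ∀ b, pd b (pd a (σ b)) x' + pd b (pd b (σ a)) x'
        = (2/(n : ℝ) * kdelta a b) * pd b (psi σ) x' := by
      intro b
      have hc := congrArg (pd b) (hfun b)
      rw [pd_add ((hσ' b).pd a) ((hσ' a).pd b) b,
          pd_const_mul hψ (2/(n : ℝ) * kdelta a b) b] at hc
      exact congrFun hc x'
    have hsum := Finset.sum_congr rfl (fun b (_ : b ∈ Finset.univ) => h2 b)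
    rw [Finset.sum_add_distrib] at hsum
    have hswap : ∑ b, pd b (pd a (σ b)) x' = pd a (psi σ) x' := by
      have h1 : pd a (psi σ) = fun z => ∑ b, pd a (pd b (σ b)) z :=
        pd_sum Finset.univ (fun b _ => (hσ' b).pd b) a
      rw [congrFun h1 x']
      exact Finset.sum_congr rfl (fun b _ => pd_comm (hσ' b) b a x')
    have hdelta : ∑ b, (2/(n : ℝ) * kdelta a b) * pd b (psi σ) x'
        = 2/(n : ℝ) * pd a (psi σ) x' := by
      simp [kdelta, mul_ite, ite_mul, mul_assoc]
    rw [hswap, hdelta] at hsum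
    linarith
  -- (E3) harmonicity of psi
  have e3 : ∀ x', ∑ b, pd b (pd b (psi σ)) x' = 0 := by
    intro x'
    have key : ∀ b : Fin n, pd b (pd b (psi σ))
        = fun z => ∑ c, pd c (pd b (pd b (σ c))) z := by
      intro b
      have h1 : pd b (psi σ) = fun z => ∑ c, pd b (pd c (σ c)) z :=
        pd_sum Finset.univ (fun c _ => (hσ' c).pd c) b
      rw [h1, pd_sum Finset.univ (fun c _ => ((hσ' c).pd c).pd b) b]
      funext z
      refine Finset.sum_congr rfl (fun c _ => ?_)
      have hcomm : pd b (pd c (σ c)) = pd c (pd b (σ c)) :=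
        funext (pd_comm (hσ' c) b c)
      rw [hcomm]
      exact pd_comm ((hσ' c).pd b) b c z
    have h3 : ∀ c : Fin n, ∑ b, pd c (pd b (pd b (σ c))) x'
        = (2/(n : ℝ) - 1) * pd c (pd c (psi σ)) x' := by
      intro c
      have h4 : pd c (fun z => ∑ b, pd b (pd b (σ c)) z)
          = fun z => ∑ b, pd c (pd b (pd b (σ c))) z :=
        pd_sum Finset.univ (fun b _ => ((hσ' c).pd b).pd b) c
      have h5 : (fun z => ∑ b, pd b (pd b (σ c)) z)
          = fun z => (2/(n : ℝ) - 1) * pd c (psi σ) z := funext (e2 c)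
      rw [← congrFun h4 x', h5, pd_const_mul (hψ.pd c) _ c]
    have hT : ∑ b, pd b (pd b (psi σ)) x'
        = (2/(n : ℝ) - 1) * ∑ c, pd c (pd c (psi σ)) x' := by
      calc ∑ b, pd b (pd b (psi σ)) x'
          = ∑ b, ∑ c, pd c (pd b (pd b (σ c))) x' :=
            Finset.sum_congr rfl (fun b _ => congrFun (key b) x')
        _ = ∑ c, ∑ b, pd c (pd b (pd b (σ c))) x' := Finset.sum_comm
        _ = ∑ c, (2/(n : ℝ) - 1) * pd c (pd c (psi σ)) x' :=
            Finset.sum_congr rfl (fun c _ => h3 c)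
        _ = (2/(n : ℝ) - 1) * ∑ c, pd c (pd c (psi σ)) x' := by rw [Finset.mul_sum]
    have hfac : (2 - 2/(n : ℝ)) * (∑ b, pd b (pd b (psi σ)) x') = 0 := by linarith
    have hpos : (0:ℝ) < 2 - 2/(n : ℝ) := by
      rw [sub_pos, div_lt_iff₀ (by linarith : (0:ℝ) < (n:ℝ))]
      nlinarith
    exact (mul_eq_zero.mp hfac).resolve_left (ne_of_gt hpos)
  -- commuting lap with pd
  have fC : ∀ a, lap (pd a f) x = pd a (lap f) x := by
    intro a
    have h1 : pd a (lap f) = fun z => -(∑ b, pd a (pd b (pd b f)) z) := by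
      have e0 : lap f = fun z => -(∑ b, pd b (pd b f) z) := rfl
      rw [e0, pd_neg (f := fun z => ∑ b, pd b (pd b f) z),
          pd_sum Finset.univ (fun b _ => (hf'.pd b).pd b) a]
    have h2 : ∀ b, pd b (pd b (pd a f)) x = pd a (pd b (pd b f)) x := by
      intro b
      have hcomm : pd b (pd a f) = pd a (pd b f) := funext (pd_comm hf' b a)
      rw [hcomm]
      exact pd_comm (hf'.pd b) b a x
    rw [congrFun h1 x]
    simp only [lap, h2]
  have fA : ∀ a, lap (σ a) x = (1 - 2/(n : ℝ)) * pd a (psi σ) x := by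
    intro a
    simp only [lap, e2 a x]
    ring
  have fD : lap (psi σ) x = 0 := by simp only [lap, e3 x, neg_zero]
  -- the key double-sum identity
  have fB : ∑ a, ∑ b, pd b (σ a) x * pd b (pd a f) x
      = -(1/(n : ℝ)) * psi σ x * lap f x := by
    have hswap2 : ∑ a, ∑ b, pd a (σ b) x * pd b (pd a f) x
        = ∑ a, ∑ b, pd b (σ a) x * pd b (pd a f) x := by
      rw [Finset.sum_comm]
      exact Finset.sum_congr rfl (fun a _ => Finset.sum_congr rfl
        (fun b _ => by rw [pd_comm hf' a b]))
    have h2s : ∑ a, ∑ b, (2/(n : ℝ) * kdelta a b * psi σ x) * pd b (pd a f) x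
        = 2/(n : ℝ) * psi σ x * ∑ a, pd a (pd a f) x := by
      rw [Finset.mul_sum]
      refine Finset.sum_congr rfl (fun a _ => ?_)
      simp [kdelta, ite_mul, mul_ite]
    have hdouble : (∑ a, ∑ b, pd b (σ a) x * pd b (pd a f) x) * 2
        = 2/(n : ℝ) * psi σ x * ∑ a, pd a (pd a f) x := by
      calc (∑ a, ∑ b, pd b (σ a) x * pd b (pd a f) x) * 2
          = ∑ a, ∑ b, (pd a (σ b) x * pd b (pd a f) x + pd b (σ a) x * pd b (pd a f) x) := by
            simp only [Finset.sum_add_distrib]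
            rw [hswap2]; ring
        _ = ∑ a, ∑ b, (2/(n : ℝ) * kdelta a b * psi σ x) * pd b (pd a f) x := by
            refine Finset.sum_congr rfl (fun a _ => Finset.sum_congr rfl (fun b _ => ?_))
            rw [← add_mul, e1 a b x]
        _ = 2/(n : ℝ) * psi σ x * ∑ a, pd a (pd a f) x := h2s
    have hl : lap f x = -(∑ a, pd a (pd a f) x) := rfl
    rw [hl]
    linear_combination hdouble / 2
  -- main computation
  have hpsix : (∑ a, pd a (σ a) x) = psi σ x := rfl
  have hGfun : (fun y => (∑ a, σ a y * pd a f y) + C * (∑ a, pd a (σ a) y) * f y)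
      = fun y => (∑ a, σ a y * pd a f y) + C * (psi σ y * f y) := by
    funext y
    rw [mul_assoc]
    rfl
  rw [hGfun, hpsix]
  have hA : Sm (fun y => ∑ a, σ a y * pd a f y) :=
    Sm.csum Finset.univ (fun a _ => (hσ' a).mul (hf'.pd a))
  have hB : Sm (fun y => psi σ y * f y) := hψ.mul hf'
  have hB' : Sm (fun y => C * (psi σ y * f y)) := hB.cmul C
  have step1 : lap (fun y => (∑ a, σ a y * pd a f y) + C * (psi σ y * f y)) x
      = lap (fun y => ∑ a, σ a y * pd a f y) x + lap (fun y => C * (psi σ y * f y)) x :=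
    lap_add hA hB' x
  have step2 : lap (fun y => ∑ a, σ a y * pd a f y) x
      = ∑ a, lap (fun y => σ a y * pd a f y) x :=
    lap_sum Finset.univ (fun a _ => (hσ' a).mul (hf'.pd a)) x
  have step3 : lap (fun y => C * (psi σ y * f y)) x = C * lap (fun y => psi σ y * f y) x :=
    lap_const_mul hB C x
  have step5 : lap (fun y => psi σ y * f y) x
      = lap (psi σ) x * f x + psi σ x * lap f x - 2 * ∑ b, pd b (psi σ) x * pd b f x :=
    lap_mul hψ hf' x
  have step6 : ∑ a, lap (fun y => σ a y * pd a f y) x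
      = ∑ a, ((1 - 2/(n : ℝ)) * pd a (psi σ) x * pd a f x + σ a x * pd a (lap f) x
          - 2 * ∑ b, pd b (σ a) x * pd b (pd a f) x) := by
    refine Finset.sum_congr rfl (fun a _ => ?_)
    rw [lap_mul (hσ' a) (hf'.pd a) x, fA a, fC a]
  rw [step1, step2, step3, step5, step6, fD]
  rw [Finset.sum_sub_distrib, Finset.sum_add_distrib]
  have asum : ∑ a, (1 - 2/(n : ℝ)) * pd a (psi σ) x * pd a f x
      = (1 - 2/(n : ℝ)) * ∑ a, pd a (psi σ) x * pd a f x := by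
    rw [Finset.mul_sum]
    exact Finset.sum_congr rfl (fun a _ => by ring)
  have bsum : ∑ a, 2 * ∑ b, pd b (σ a) x * pd b (pd a f) x
      = 2 * (-(1/(n : ℝ)) * psi σ x * lap f x) := by
    rw [← Finset.mul_sum, fB]
  rw [asum, bsum, hC]
  field_simp
  ring
end
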